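/- arXiv:1602.03198 — 2 statements merged into one kernel-verified Lean document; each statement's English description precedes it below -/
import Mathlib

section
/- The infinite series ∑_{n=1}^∞ H_n² / (n+1)² equals (11/4)ζ(4). -/
/-- Generalized harmonic number `H_n^{(r)} = ∑_{j=1}^n 1/j^r`. -/
noncomputable def H (n r : ℕ) : ℝ := ∑ j ∈ Finset.range n, (1 : ℝ) / (j + 1) ^ r

/-- Riemann zeta value `ζ(s) = ∑_{n=1}^∞ 1/n^s` (as a real series). -/
noncomputable def Z (s : ℕ) : ℝ := ∑' n : ℕ, (1 : ℝ) / (n + 1) ^ s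

/-- Double zeta value `ζ(a,b) = ∑_{m>n≥1} 1/(m^a n^b)`. -/
noncomputable def Z2 (a b : ℕ) : ℝ :=
  ∑' m : ℕ, (∑ j ∈ Finset.range m, (1 : ℝ) / (j + 1) ^ b) / (m + 1) ^ a

open Finset Filter Real ENNReal




noncomputable def zr (s n : ℕ) : ℝ := (1 : ℝ) / ((n : ℝ) + 1) ^ s

lemma zr_nonneg (s n : ℕ) : 0 ≤ zr s n := by unfold zr; positivity

lemma H_eq (n s : ℕ) : H n s = ∑ j ∈ range n, zr s j := rfl

lemma Z_eq (s : ℕ) : Z s = ∑' n, zr s n := rfl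

lemma H_nonneg (n s : ℕ) : 0 ≤ H n s := Finset.sum_nonneg fun j _ => zr_nonneg s j

lemma H_succ (n s : ℕ) : H (n + 1) s = H n s + zr s n := Finset.sum_range_succ _ n

lemma summable_zr {s : ℕ} (hs : 2 ≤ s) : Summable (zr s) := by
  have h : Summable (fun n : ℕ => (1 : ℝ) / (n : ℝ) ^ s) :=
    Real.summable_one_div_nat_pow.2 hs
  have := (summable_nat_add_iff 1).2 h
  exact this.congr fun n => by simp [zr]

lemma summable_zr_add {s : ℕ} (hs : 2 ≤ s) (M : ℕ) :
    Summable (fun n => zr s (n + M)) :=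
  (summable_nat_add_iff M).2 (summable_zr hs)

lemma tail_eq {s : ℕ} (hs : 2 ≤ s) (M : ℕ) :
    ∑' c : ℕ, zr s (c + M) = Z s - H M s := by
  have := Summable.sum_add_tsum_nat_add (f := zr s) M (summable_zr hs)
  rw [Z_eq, H_eq]
  linarith

lemma tail_nonneg {s : ℕ} (hs : 2 ≤ s) (M : ℕ) : 0 ≤ Z s - H M s := by
  rw [← tail_eq hs M]
  exact tsum_nonneg fun c => zr_nonneg _ _

lemma hz2 : HasSum (zr 2) (π ^ 2 / 6) := by
  have := (hasSum_nat_add_iff' (f := fun n : ℕ => (1 : ℝ) / (n : ℝ) ^ 2) 1).2 hasSum_zeta_two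
  simp only [Finset.range_one, Finset.sum_singleton, Nat.cast_zero] at this
  have h0 : π ^ 2 / 6 - 1 / (0:ℝ) ^ 2 = π ^ 2 / 6 := by norm_num
  rw [h0] at this
  exact this.congr_fun fun n => by simp [zr]

lemma hz4 : HasSum (zr 4) (π ^ 4 / 90) := by
  have := (hasSum_nat_add_iff' (f := fun n : ℕ => (1 : ℝ) / (n : ℝ) ^ 4) 1).2 hasSum_zeta_four
  simp only [Finset.range_one, Finset.sum_singleton, Nat.cast_zero] at this
  have h0 : π ^ 4 / 90 - 1 / (0:ℝ) ^ 4 = π ^ 4 / 90 := by norm_num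
  rw [h0] at this
  exact this.congr_fun fun n => by simp [zr]

lemma Z2_val : Z 2 = π ^ 2 / 6 := by rw [Z_eq]; exact hz2.tsum_eq
lemma Z4_val : Z 4 = π ^ 4 / 90 := by rw [Z_eq]; exact hz4.tsum_eq

-- partial sums of the telescoping series
lemma partial_telescope (M N : ℕ) :
    ∑ c ∈ range N, (1:ℝ) / (((c:ℝ) + 1) * ((c:ℝ) + (M:ℝ) + 2)) =
      (H (M + 1) 1 + H N 1 - H (N + M + 1) 1) / ((M:ℝ) + 1) := by
  induction N with
  | zero => simp [H]
  | succ N ih =>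
    rw [Finset.sum_range_succ, ih]
    have e1 : H (N + 1) 1 = H N 1 + zr 1 N := H_succ N 1
    have e2 : H (N + 1 + M + 1) 1 = H (N + M + 1) 1 + zr 1 (N + M + 1) := by
      have : N + 1 + M + 1 = (N + M + 1) + 1 := by ring
      rw [this]; exact H_succ (N + M + 1) 1
    rw [e1, e2]
    have hN : (0:ℝ) < (N:ℝ) + 1 := by positivity
    have hM : (0:ℝ) < (M:ℝ) + 1 := by positivity
    have hNM : (0:ℝ) < (N:ℝ) + (M:ℝ) + 2 := by positivity
    simp only [zr]
    push_cast
    rw [pow_one, pow_one]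
    field_simp
    ring

lemma H_diff_le (N K : ℕ) : H (N + K) 1 - H N 1 ≤ (K:ℝ) * (1 / ((N:ℝ) + 1)) := by
  induction K with
  | zero => simp [H]
  | succ K ih =>
    have : N + (K + 1) = (N + K) + 1 := by ring
    rw [this, H_succ]
    have hb : zr 1 (N + K) ≤ 1 / ((N:ℝ) + 1) := by
      unfold zr
      rw [pow_one]
      apply one_div_le_one_div_of_le (by positivity)
      push_cast; linarith
    push_cast
    linarith

lemma H_diff_nonneg (N K : ℕ) : 0 ≤ H (N + K) 1 - H N 1 := by
  have : H N 1 ≤ H (N + K) 1 := by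
    rw [H_eq, H_eq]
    exact Finset.sum_le_sum_of_subset_of_nonneg (Finset.range_subset_range.2 (Nat.le_add_right N K))
      (fun j _ _ => zr_nonneg 1 j)
  linarith

/-- R1: ∑_{c≥0} 1/((c+1)(c+M+2)) = H_{M+1}/(M+1) -/
lemma hasSum_R1 (M : ℕ) :
    HasSum (fun c : ℕ => (1:ℝ) / (((c:ℝ) + 1) * ((c:ℝ) + (M:ℝ) + 2)))
      (H (M + 1) 1 / ((M:ℝ) + 1)) := by
  rw [hasSum_iff_tendsto_nat_of_nonneg (fun c => by positivity)]
  have key : ∀ N, ∑ c ∈ range N, (1:ℝ) / (((c:ℝ) + 1) * ((c:ℝ) + (M:ℝ) + 2)) =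
      (H (M + 1) 1 + H N 1 - H (N + M + 1) 1) / ((M:ℝ) + 1) := partial_telescope M
  simp only [key]
  have hM : (0:ℝ) < (M:ℝ) + 1 := by positivity
  have hlim : Tendsto (fun N : ℕ => H (N + (M+1)) 1 - H N 1) atTop (nhds 0) := by
    apply squeeze_zero (fun N => H_diff_nonneg N (M+1))
      (fun N => (H_diff_le N (M+1)).trans (le_of_eq (by push_cast; rw [mul_one_div])))
    · -- Tendsto (fun N => ((M:ℝ)+1) / ((N:ℝ)+1)) atTop (nhds 0)
      have := tendsto_const_div_atTop_nhds_zero_nat ((M:ℝ) + 1)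
      have h2 := this.comp (tendsto_add_atTop_nat 1)
      refine h2.congr fun n => ?_
      simp [Function.comp]
  have : Tendsto (fun N : ℕ => (H (M + 1) 1 + H N 1 - H (N + M + 1) 1) / ((M:ℝ) + 1))
      atTop (nhds ((H (M+1) 1 - 0) / ((M:ℝ) + 1))) := by
    apply Filter.Tendsto.div_const
    have : (fun N : ℕ => H (M + 1) 1 + H N 1 - H (N + M + 1) 1)
        = (fun N : ℕ => H (M + 1) 1 - (H (N + (M + 1)) 1 - H N 1)) := by
      funext N
      have : N + (M + 1) = N + M + 1 := by ring
      rw [this]; ring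
    rw [this]
    exact tendsto_const_nhds.sub hlim
  simpa using this

/-- F1 -/
lemma F1 (m : ℕ) : H m 1 ^ 2 = 2 * ∑ s ∈ range m, H s 1 / ((s:ℝ) + 1) + H m 2 := by
  induction m with
  | zero => simp [H]
  | succ m ih =>
    rw [H_succ, H_succ m 2, Finset.sum_range_succ]
    have hz : zr 1 m = 1 / ((m:ℝ) + 1) := by simp [zr]
    have hz2 : zr 2 m = (1 / ((m:ℝ) + 1)) ^ 2 := by simp [zr]
    rw [hz, hz2]
    have : (H m 1 + 1 / ((m:ℝ) + 1)) ^ 2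
        = H m 1 ^ 2 + 2 * (H m 1 / ((m:ℝ)+1)) + (1 / ((m:ℝ) + 1))^2 := by ring
    rw [this, ih]
    ring

/-- R2: antidiagonal sum of 1/(ab) -/
lemma R2 (s : ℕ) : ∑ p ∈ Finset.HasAntidiagonal.antidiagonal s, (1:ℝ) / (((p.1:ℝ) + 1) * ((p.2:ℝ) + 1))
    = 2 * H (s + 1) 1 / ((s:ℝ) + 2) := by
  rw [Finset.Nat.sum_antidiagonal_eq_sum_range_succ_mk]
  have step : ∀ k ∈ range (s + 1), (1:ℝ) / (((k:ℝ) + 1) * (((s - k : ℕ):ℝ) + 1))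
      = (1 / ((s:ℝ) + 2)) * (1 / ((k:ℝ) + 1) + 1 / (((s - k : ℕ):ℝ) + 1)) := by
    intro k hk
    have hk' : k ≤ s := Nat.lt_succ_iff.1 (Finset.mem_range.1 hk)
    rw [Nat.cast_sub hk']
    have h1 : (0:ℝ) < (k:ℝ) + 1 := by positivity
    have h2 : (0:ℝ) < (s:ℝ) - (k:ℝ) + 1 := by
      have : (k:ℝ) ≤ (s:ℝ) := by exact_mod_cast hk'
      linarith
    have h3 : (0:ℝ) < (s:ℝ) + 2 := by positivity
    field_simp
    ring
  rw [Finset.sum_congr rfl step, ← Finset.mul_sum]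
  have hrefl : ∑ k ∈ range (s + 1), (1:ℝ) / (((s - k : ℕ):ℝ) + 1)
      = ∑ k ∈ range (s + 1), (1:ℝ) / ((k:ℝ) + 1) := by
    have := Finset.sum_range_reflect (fun j => (1:ℝ) / ((j:ℝ) + 1)) (s + 1)
    simpa using this
  rw [Finset.sum_add_distrib, hrefl]
  have hH : ∑ k ∈ range (s + 1), (1:ℝ) / ((k:ℝ) + 1) = H (s + 1) 1 := by
    rw [H_eq]; exact Finset.sum_congr rfl fun j _ => by simp [zr]
  rw [hH]
  ring

/-- R3: antidiagonal sum of 1/(a²b²) -/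
lemma R3 (s : ℕ) : ∑ p ∈ Finset.HasAntidiagonal.antidiagonal s, (1:ℝ) / (((p.1:ℝ) + 1) ^ 2 * ((p.2:ℝ) + 1) ^ 2)
    = 2 * H (s + 1) 2 / ((s:ℝ) + 2) ^ 2 + 4 * H (s + 1) 1 / ((s:ℝ) + 2) ^ 3 := by
  rw [Finset.Nat.sum_antidiagonal_eq_sum_range_succ_mk]
  have step : ∀ k ∈ range (s + 1), (1:ℝ) / (((k:ℝ) + 1) ^ 2 * (((s - k : ℕ):ℝ) + 1) ^ 2)
      = (1 / ((s:ℝ) + 2) ^ 2) * (1 / ((k:ℝ) + 1) ^ 2 + 1 / (((s - k:ℕ):ℝ) + 1) ^ 2)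
        + (2 / ((s:ℝ) + 2) ^ 3) * (1 / ((k:ℝ) + 1) + 1 / (((s - k:ℕ):ℝ) + 1)) := by
    intro k hk
    have hk' : k ≤ s := Nat.lt_succ_iff.1 (Finset.mem_range.1 hk)
    rw [Nat.cast_sub hk']
    have h1 : (0:ℝ) < (k:ℝ) + 1 := by positivity
    have h2 : (0:ℝ) < (s:ℝ) - (k:ℝ) + 1 := by
      have : (k:ℝ) ≤ (s:ℝ) := by exact_mod_cast hk'
      linarith
    have h3 : (0:ℝ) < (s:ℝ) + 2 := by positivity
    have key : ((k:ℝ) + 1) + ((s:ℝ) - (k:ℝ) + 1) = (s:ℝ) + 2 := by ring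
    field_simp
    ring
  rw [Finset.sum_congr rfl step, Finset.sum_add_distrib, ← Finset.mul_sum, ← Finset.mul_sum]
  have refl1 : ∑ k ∈ range (s + 1), (1:ℝ) / (((s - k : ℕ):ℝ) + 1)
      = ∑ k ∈ range (s + 1), (1:ℝ) / ((k:ℝ) + 1) := by
    have := Finset.sum_range_reflect (fun j => (1:ℝ) / ((j:ℝ) + 1)) (s + 1)
    simpa using this
  have refl2 : ∑ k ∈ range (s + 1), (1:ℝ) / (((s - k : ℕ):ℝ) + 1) ^ 2
      = ∑ k ∈ range (s + 1), (1:ℝ) / ((k:ℝ) + 1) ^ 2 := by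
    have := Finset.sum_range_reflect (fun j => (1:ℝ) / ((j:ℝ) + 1) ^ 2) (s + 1)
    simpa using this
  rw [Finset.sum_add_distrib, Finset.sum_add_distrib, refl1, refl2]
  have hH1 : ∑ k ∈ range (s + 1), (1:ℝ) / ((k:ℝ) + 1) = H (s + 1) 1 := by
    rw [H_eq]; exact Finset.sum_congr rfl fun j _ => by simp [zr]
  have hH2 : ∑ k ∈ range (s + 1), (1:ℝ) / ((k:ℝ) + 1) ^ 2 = H (s + 1) 2 := by
    rw [H_eq]; exact Finset.sum_congr rfl fun j _ => by simp [zr]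
  rw [hH1, hH2]
  ring



lemma LemA (f : ℕ × ℕ → ℝ≥0∞) :
    ∑' p : ℕ × ℕ, f p = ∑' s : ℕ, ∑ p ∈ Finset.HasAntidiagonal.antidiagonal s, f p := by
  rw [← Finset.HasAntidiagonal.sigmaAntidiagonalEquivProd.tsum_eq f, ENNReal.tsum_sigma']
  exact tsum_congr fun s => (Finset.tsum_subtype (Finset.HasAntidiagonal.antidiagonal s) f)

lemma shiftIte (g : ℕ → ℝ≥0∞) (s : ℕ) :
    ∑' m : ℕ, g (m + s) = ∑' k : ℕ, if s ≤ k then g k else 0 := by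
  have hinj : Function.Injective (fun m : ℕ => m + s) := add_left_injective s
  have hsupp : Function.support (fun k => if s ≤ k then g k else 0)
      ⊆ Set.range (fun m : ℕ => m + s) := by
    intro k hk
    by_cases h : s ≤ k
    · exact ⟨k - s, by simp; omega⟩
    · simp [h] at hk
  have h := hinj.tsum_eq (f := fun k => if s ≤ k then g k else 0) hsupp
  rw [← h]
  exact tsum_congr fun m => by simp [Nat.le_add_left]

lemma shift0 (f : ℕ → ℝ≥0∞) : ∑' n, f n = f 0 + ∑' k, f (k + 1) :=
  tsum_eq_zero_add' ENNReal.summable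

def cyc : (ℕ × ℕ) × ℕ ≃ (ℕ × ℕ) × ℕ where
  toFun p := ((p.1.2, p.2), p.1.1)
  invFun p := ((p.2, p.1.1), p.1.2)
  left_inv := by rintro ⟨⟨a, b⟩, c⟩; rfl
  right_inv := by rintro ⟨⟨a, b⟩, c⟩; rfl

lemma oR_mul {x : ℝ} (hx : 0 ≤ x) (y : ℝ) : ENNReal.ofReal (x * y) = ENNReal.ofReal x * ENNReal.ofReal y :=
  ENNReal.ofReal_mul hx

lemma oR_two_mul (x : ℝ) : ENNReal.ofReal (2 * x) = 2 * ENNReal.ofReal x := by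
  rw [oR_mul (by norm_num)]; norm_num [ENNReal.ofReal]

lemma oR_ne_top (x : ℝ) : ENNReal.ofReal x ≠ ⊤ := ENNReal.ofReal_ne_top

lemma zr_succ (s n : ℕ) : zr s (n + 1) = 1 / ((n:ℝ) + 2) ^ s := by
  unfold zr
  push_cast
  ring_nf

lemma zr_mul_zr (n : ℕ) : zr 2 n * zr 2 n = zr 4 n := by
  unfold zr
  rw [div_mul_div_comm, one_mul, ← pow_add]

lemma oR_four_mul (x : ℝ) : ENNReal.ofReal (4 * x) = 4 * ENNReal.ofReal x := by
  rw [oR_mul (by norm_num)]; norm_num [ENNReal.ofReal]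

noncomputable def Se : ℝ≥0∞ := ∑' n : ℕ, ENNReal.ofReal (H (n+1) 1 ^ 2 * zr 2 (n+1))
noncomputable def Ye : ℝ≥0∞ := ∑' n : ℕ, ENNReal.ofReal (H (n+1) 2 * zr 2 (n+1))
noncomputable def Ee : ℝ≥0∞ := ∑' n : ℕ, ENNReal.ofReal (H (n+1) 1 * zr 3 (n+1))
noncomputable def Z2e : ℝ≥0∞ := ∑' n : ℕ, ENNReal.ofReal (zr 2 n)
noncomputable def Z4e : ℝ≥0∞ := ∑' n : ℕ, ENNReal.ofReal (zr 4 n)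

lemma Z2e_val : Z2e = ENNReal.ofReal (π ^ 2 / 6) := by
  rw [Z2e, ← ENNReal.ofReal_tsum_of_nonneg (fun n => zr_nonneg 2 n) hz2.summable, hz2.tsum_eq]

lemma Z4e_val : Z4e = ENNReal.ofReal (π ^ 4 / 90) := by
  rw [Z4e, ← ENNReal.ofReal_tsum_of_nonneg (fun n => zr_nonneg 4 n) hz4.summable, hz4.tsum_eq]

lemma P_eq_prod : ∑' p : ℕ × ℕ, ENNReal.ofReal (zr 2 p.1 * zr 2 p.2) = Z2e * Z2e := by
  rw [ENNReal.tsum_prod']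
  calc ∑' (a : ℕ) (b : ℕ), ENNReal.ofReal (zr 2 a * zr 2 b)
      = ∑' (a : ℕ) (b : ℕ), ENNReal.ofReal (zr 2 a) * ENNReal.ofReal (zr 2 b) :=
        tsum_congr fun a => tsum_congr fun b => oR_mul (zr_nonneg _ _) _
    _ = ∑' (a : ℕ), ENNReal.ofReal (zr 2 a) * Z2e := tsum_congr fun a => ENNReal.tsum_mul_left
    _ = Z2e * Z2e := ENNReal.tsum_mul_right

lemma ltPiece : ∑' p : ℕ × ℕ, (if p.1 < p.2 then ENNReal.ofReal (zr 2 p.1 * zr 2 p.2) else 0) = Ye := by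
  rw [ENNReal.tsum_prod', ENNReal.tsum_comm]
  have inner : ∀ b : ℕ, ∑' a : ℕ, (if a < b then ENNReal.ofReal (zr 2 a * zr 2 b) else 0)
      = ENNReal.ofReal (H b 2 * zr 2 b) := by
    intro b
    rw [tsum_eq_sum (s := Finset.range b) (fun a ha => if_neg (by simpa using ha))]
    have : ∀ a ∈ Finset.range b, (if a < b then ENNReal.ofReal (zr 2 a * zr 2 b) else 0)
        = ENNReal.ofReal (zr 2 a * zr 2 b) := fun a ha => if_pos (Finset.mem_range.1 ha)
    rw [Finset.sum_congr rfl this,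
      ← ENNReal.ofReal_sum_of_nonneg (fun i _ => mul_nonneg (zr_nonneg _ _) (zr_nonneg _ _))]
    congr 1
    rw [H_eq, Finset.sum_mul]
  rw [tsum_congr inner, shift0]
  have h0 : H 0 2 = 0 := by simp [H]
  rw [h0]
  simp [Ye]

lemma gtPiece : ∑' p : ℕ × ℕ, (if p.2 < p.1 then ENNReal.ofReal (zr 2 p.1 * zr 2 p.2) else 0) = Ye := by
  rw [← (Equiv.prodComm ℕ ℕ).tsum_eq
    (fun p : ℕ × ℕ => if p.2 < p.1 then ENNReal.ofReal (zr 2 p.1 * zr 2 p.2) else 0)]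
  rw [← ltPiece]
  exact tsum_congr fun p => by simp [Equiv.prodComm, mul_comm]

lemma eqPiece : ∑' p : ℕ × ℕ, (if p.1 = p.2 then ENNReal.ofReal (zr 2 p.1 * zr 2 p.2) else 0) = Z4e := by
  rw [ENNReal.tsum_prod']
  have inner : ∀ a : ℕ, ∑' b : ℕ, (if a = b then ENNReal.ofReal (zr 2 a * zr 2 b) else 0)
      = ENNReal.ofReal (zr 4 a) := by
    intro a
    rw [tsum_eq_sum (s := {a}) (fun b hb => if_neg (fun h => hb (by simp [h])))]
    simp only [Finset.sum_singleton, if_pos rfl, zr_mul_zr]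
    simp
  rw [tsum_congr inner]; rfl

lemma stuffle : Z2e * Z2e = 2 * Ye + Z4e := by
  rw [← P_eq_prod]
  have split : ∀ p : ℕ × ℕ, ENNReal.ofReal (zr 2 p.1 * zr 2 p.2)
      = (if p.1 < p.2 then ENNReal.ofReal (zr 2 p.1 * zr 2 p.2) else 0)
        + ((if p.1 = p.2 then ENNReal.ofReal (zr 2 p.1 * zr 2 p.2) else 0)
          + (if p.2 < p.1 then ENNReal.ofReal (zr 2 p.1 * zr 2 p.2) else 0)) := by
    intro p
    rcases lt_trichotomy p.1 p.2 with h|h|h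
    · simp [h, Nat.lt_asymm h, h.ne]
    · simp [h, lt_irrefl]
    · simp [h, Nat.lt_asymm h, h.ne']
  rw [tsum_congr split, ENNReal.tsum_add, ENNReal.tsum_add, ltPiece, eqPiece, gtPiece]
  ring

lemma antidiag_eq : Z2e * Z2e = 2 * Ye + 4 * Ee := by
  rw [← P_eq_prod, LemA]
  have inner : ∀ s : ℕ, ∑ p ∈ Finset.HasAntidiagonal.antidiagonal s, ENNReal.ofReal (zr 2 p.1 * zr 2 p.2)
      = 2 * ENNReal.ofReal (H (s+1) 2 * zr 2 (s+1)) + 4 * ENNReal.ofReal (H (s+1) 1 * zr 3 (s+1)) := by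
    intro s
    rw [← ENNReal.ofReal_sum_of_nonneg
      (fun p _ => mul_nonneg (zr_nonneg _ _) (zr_nonneg _ _))]
    have e1 : ∑ p ∈ Finset.HasAntidiagonal.antidiagonal s, zr 2 p.1 * zr 2 p.2
        = ∑ p ∈ Finset.HasAntidiagonal.antidiagonal s, (1:ℝ) / (((p.1:ℝ)+1)^2 * ((p.2:ℝ)+1)^2) :=
      Finset.sum_congr rfl fun p _ => by unfold zr; rw [div_mul_div_comm, one_mul]
    rw [e1, R3]
    have e2 : 2 * H (s+1) 2 / ((s:ℝ)+2)^2 + 4 * H (s+1) 1 / ((s:ℝ)+2)^3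
        = 2 * (H (s+1) 2 * zr 2 (s+1)) + 4 * (H (s+1) 1 * zr 3 (s+1)) := by
      rw [zr_succ, zr_succ]; ring
    have hx : (0:ℝ) ≤ 2 * (H (s+1) 2 * zr 2 (s+1)) :=
      mul_nonneg (by norm_num) (mul_nonneg (H_nonneg _ _) (zr_nonneg _ _))
    have hy : (0:ℝ) ≤ 4 * (H (s+1) 1 * zr 3 (s+1)) :=
      mul_nonneg (by norm_num) (mul_nonneg (H_nonneg _ _) (zr_nonneg _ _))
    rw [e2, ENNReal.ofReal_add hx hy, oR_two_mul, oR_four_mul]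
  rw [tsum_congr inner, ENNReal.tsum_add, ENNReal.tsum_mul_left, ENNReal.tsum_mul_left]
  rfl

noncomputable def tt (a b c : ℕ) : ℝ :=
  1 / (((a:ℝ)+1) * ((b:ℝ)+1) * ((c:ℝ)+1) * ((a:ℝ)+(b:ℝ)+(c:ℝ)+3))

lemma tt_nonneg (a b c : ℕ) : 0 ≤ tt a b c := by unfold tt; positivity

noncomputable def T3e : ℝ≥0∞ := ∑' p : (ℕ×ℕ)×ℕ, ENNReal.ofReal (tt p.1.1 p.1.2 p.2)

noncomputable def ww (a b c : ℕ) : ℝ := 1 / (((a:ℝ)+1) * ((b:ℝ)+1)) * zr 2 (a+b+c+2)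

lemma ww_nonneg (a b c : ℕ) : 0 ≤ ww a b c :=
  mul_nonneg (by positivity) (zr_nonneg _ _)

noncomputable def We : ℝ≥0∞ := ∑' p : (ℕ×ℕ)×ℕ, ENNReal.ofReal (ww p.1.1 p.1.2 p.2)

lemma inner_c (a b : ℕ) : ∑' c : ℕ, ENNReal.ofReal (tt a b c)
    = ENNReal.ofReal ((H (a+b+2) 1 / ((a:ℝ)+(b:ℝ)+2)) * (1 / (((a:ℝ)+1) * ((b:ℝ)+1)))) := by
  have hs := hasSum_R1 (a+b+1)
  have hK : (0:ℝ) ≤ 1 / (((a:ℝ)+1) * ((b:ℝ)+1)) := by positivity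
  have hpt : ∀ c : ℕ, tt a b c
      = 1 / (((a:ℝ)+1) * ((b:ℝ)+1))
        * (1 / (((c:ℝ)+1) * ((c:ℝ) + ((a+b+1:ℕ):ℝ) + 2))) := by
    intro c
    unfold tt
    rw [div_mul_div_comm, one_mul]
    congr 1
    push_cast
    ring
  calc ∑' c : ℕ, ENNReal.ofReal (tt a b c)
      = ∑' c : ℕ, ENNReal.ofReal (1 / (((a:ℝ)+1) * ((b:ℝ)+1)))
          * ENNReal.ofReal (1 / (((c:ℝ)+1) * ((c:ℝ) + ((a+b+1:ℕ):ℝ) + 2))) :=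
        tsum_congr fun c => by rw [hpt c, ENNReal.ofReal_mul hK]
    _ = ENNReal.ofReal (1 / (((a:ℝ)+1) * ((b:ℝ)+1)))
          * ∑' c : ℕ, ENNReal.ofReal (1 / (((c:ℝ)+1) * ((c:ℝ) + ((a+b+1:ℕ):ℝ) + 2))) :=
        ENNReal.tsum_mul_left
    _ = ENNReal.ofReal (1 / (((a:ℝ)+1) * ((b:ℝ)+1)))
          * ENNReal.ofReal (H (a+b+2) 1 / ((a:ℝ)+(b:ℝ)+2)) := by
        rw [← ENNReal.ofReal_tsum_of_nonneg (fun c => by positivity) hs.summable,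
          hs.tsum_eq]
        congr 1
        · push_cast; ring_nf
    _ = ENNReal.ofReal ((H (a+b+2) 1 / ((a:ℝ)+(b:ℝ)+2)) * (1 / (((a:ℝ)+1) * ((b:ℝ)+1)))) := by
        rw [← ENNReal.ofReal_mul hK, mul_comm]

/-- generic antidiagonal collapse used twice: for terms of shape
    ofReal (G (p.1+p.2) * (1/((p.1+1)(p.2+1)))) -/
lemma antidiag_collapse (G : ℕ → ℝ) (hG : ∀ s, 0 ≤ G s) :
    ∑' q : ℕ × ℕ, ENNReal.ofReal (G (q.1+q.2) * (1 / (((q.1:ℝ)+1) * ((q.2:ℝ)+1))))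
      = ∑' s : ℕ, ENNReal.ofReal (G s * (2 * H (s+1) 1 / ((s:ℝ)+2))) := by
  rw [LemA]
  refine tsum_congr fun s => ?_
  have e1 : ∀ p ∈ Finset.HasAntidiagonal.antidiagonal s,
      ENNReal.ofReal (G (p.1+p.2) * (1 / (((p.1:ℝ)+1) * ((p.2:ℝ)+1))))
        = ENNReal.ofReal (G s * (1 / (((p.1:ℝ)+1) * ((p.2:ℝ)+1)))) := by
    intro p hp
    rw [Finset.HasAntidiagonal.mem_antidiagonal] at hp
    rw [hp]
  rw [Finset.sum_congr rfl e1,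
    ← ENNReal.ofReal_sum_of_nonneg (fun p _ => mul_nonneg (hG s) (by positivity)),
    ← Finset.mul_sum, R2]

lemma T3_eq1 : T3e = 2 * Se + 2 * Ee := by
  have h1 : T3e = ∑' q : ℕ × ℕ,
      ENNReal.ofReal ((fun s => H (s+2) 1 / ((s:ℝ)+2)) (q.1+q.2)
        * (1 / (((q.1:ℝ)+1) * ((q.2:ℝ)+1)))) := by
    rw [T3e, ENNReal.tsum_prod']
    refine tsum_congr fun q => ?_
    rw [inner_c q.1 q.2]
    congr 2
    push_cast
    ring_nf
  rw [h1, antidiag_collapse (fun s => H (s+2) 1 / ((s:ℝ)+2)) (fun s => div_nonneg (H_nonneg _ _) (by positivity))]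
  have e2 : ∀ s : ℕ, (H (s+2) 1 / ((s:ℝ)+2)) * (2 * H (s+1) 1 / ((s:ℝ)+2))
      = 2 * (H (s+1) 1 ^ 2 * zr 2 (s+1)) + 2 * (H (s+1) 1 * zr 3 (s+1)) := by
    intro s
    have hh : H (s+2) 1 = H (s+1) 1 + zr 1 (s+1) := H_succ (s+1) 1
    rw [hh, zr_succ, zr_succ, zr_succ]
    have h3 : (0:ℝ) < (s:ℝ) + 2 := by positivity
    field_simp
  calc ∑' s : ℕ, ENNReal.ofReal ((H (s+2) 1 / ((s:ℝ)+2)) * (2 * H (s+1) 1 / ((s:ℝ)+2)))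
      = ∑' s : ℕ, (2 * ENNReal.ofReal (H (s+1) 1 ^ 2 * zr 2 (s+1))
          + 2 * ENNReal.ofReal (H (s+1) 1 * zr 3 (s+1))) := by
        refine tsum_congr fun s => ?_
        rw [e2 s, ENNReal.ofReal_add
          (mul_nonneg (by norm_num) (mul_nonneg (by positivity) (zr_nonneg _ _)))
          (mul_nonneg (by norm_num) (mul_nonneg (H_nonneg _ _) (zr_nonneg _ _))),
          oR_two_mul, oR_two_mul]
    _ = 2 * Se + 2 * Ee := by
        rw [ENNReal.tsum_add, ENNReal.tsum_mul_left, ENNReal.tsum_mul_left]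
        rfl

lemma T3_eq2 : T3e = 3 * We := by
  have hpt : ∀ a b c : ℕ, tt a b c = ww a b c + (ww b c a + ww c a b) := by
    intro a b c
    unfold tt ww zr
    have h1 : (0:ℝ) < (a:ℝ)+1 := by positivity
    have h2 : (0:ℝ) < (b:ℝ)+1 := by positivity
    have h3 : (0:ℝ) < (c:ℝ)+1 := by positivity
    have h4 : (0:ℝ) < (a:ℝ)+(b:ℝ)+(c:ℝ)+3 := by positivity
    push_cast
    field_simp
    ring
  have split : T3e = We + (∑' p : (ℕ×ℕ)×ℕ, ENNReal.ofReal (ww p.1.2 p.2 p.1.1)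
      + ∑' p : (ℕ×ℕ)×ℕ, ENNReal.ofReal (ww p.2 p.1.1 p.1.2)) := by
    rw [T3e, We, ← ENNReal.tsum_add, ← ENNReal.tsum_add]
    refine tsum_congr fun p => ?_
    rw [hpt p.1.1 p.1.2 p.2,
      ENNReal.ofReal_add (ww_nonneg _ _ _) (add_nonneg (ww_nonneg _ _ _) (ww_nonneg _ _ _)),
      ENNReal.ofReal_add (ww_nonneg _ _ _) (ww_nonneg _ _ _)]
  have c1 : ∑' p : (ℕ×ℕ)×ℕ, ENNReal.ofReal (ww p.1.2 p.2 p.1.1) = We := by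
    rw [We, ← cyc.tsum_eq (fun p : (ℕ×ℕ)×ℕ => ENNReal.ofReal (ww p.1.1 p.1.2 p.2))]
    rfl
  have c2 : ∑' p : (ℕ×ℕ)×ℕ, ENNReal.ofReal (ww p.2 p.1.1 p.1.2) = We := by
    rw [We, ← (cyc.trans cyc).tsum_eq (fun p : (ℕ×ℕ)×ℕ => ENNReal.ofReal (ww p.1.1 p.1.2 p.2))]
    rfl
  rw [split, c1, c2]
  ring

lemma F1' (k : ℕ) : ∑ s ∈ range (k+1), 2 * H (s+1) 1 / ((s:ℝ)+2)
    = H (k+2) 1 ^ 2 - H (k+2) 2 := by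
  have h := F1 (k+2)
  have e : ∑ s ∈ range (k+2), H s 1 / ((s:ℝ)+1)
      = ∑ s ∈ range (k+1), H (s+1) 1 / ((s:ℝ)+2) := by
    rw [Finset.sum_range_succ' (fun s => H s 1 / ((s:ℝ)+1)) (k+1)]
    have h0 : H 0 1 = 0 := by simp [H]
    rw [h0]
    have hc : ∀ s ∈ range (k+1), H (s+1) 1 / (((s+1:ℕ):ℝ)+1) = H (s+1) 1 / ((s:ℝ)+2) := by
      intro s _
      push_cast
      ring_nf
    rw [Finset.sum_congr rfl hc]
    simp
  have e2 : ∑ s ∈ range (k+1), 2 * H (s+1) 1 / ((s:ℝ)+2)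
      = 2 * ∑ s ∈ range (k+1), H (s+1) 1 / ((s:ℝ)+2) := by
    rw [Finset.mul_sum]
    exact Finset.sum_congr rfl fun s _ => by ring
  rw [e2, ← e]
  linarith

lemma Hsq_sub_nonneg (k : ℕ) : 0 ≤ H (k+2) 1 ^ 2 - H (k+2) 2 := by
  rw [← F1']
  refine Finset.sum_nonneg fun s _ => ?_
  have := H_nonneg (s+1) 1
  positivity

lemma We_eq : We = ∑' k : ℕ, ENNReal.ofReal ((H (k+2) 1 ^ 2 - H (k+2) 2) * zr 2 (k+2)) := by
  have step1 : We = ∑' q : ℕ × ℕ,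
      ENNReal.ofReal ((fun s => Z 2 - H (s+2) 2) (q.1+q.2)
        * (1 / (((q.1:ℝ)+1) * ((q.2:ℝ)+1)))) := by
    rw [We, ENNReal.tsum_prod']
    refine tsum_congr fun q => ?_
    have hK : (0:ℝ) ≤ 1 / (((q.1:ℝ)+1) * ((q.2:ℝ)+1)) := by positivity
    calc ∑' c : ℕ, ENNReal.ofReal (ww q.1 q.2 c)
        = ∑' c : ℕ, ENNReal.ofReal (1 / (((q.1:ℝ)+1) * ((q.2:ℝ)+1)))
            * ENNReal.ofReal (zr 2 (c + (q.1+q.2+2))) := by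
          refine tsum_congr fun c => ?_
          unfold ww
          have harg : q.1+q.2+c+2 = c+(q.1+q.2+2) := by omega
          rw [harg, ENNReal.ofReal_mul hK]
      _ = ENNReal.ofReal (1 / (((q.1:ℝ)+1) * ((q.2:ℝ)+1)))
            * ∑' c : ℕ, ENNReal.ofReal (zr 2 (c + (q.1+q.2+2))) := ENNReal.tsum_mul_left
      _ = ENNReal.ofReal (1 / (((q.1:ℝ)+1) * ((q.2:ℝ)+1)))
            * ENNReal.ofReal (Z 2 - H (q.1+q.2+2) 2) := by
          rw [← ENNReal.ofReal_tsum_of_nonneg (fun c => zr_nonneg _ _)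
            (summable_zr_add (le_refl 2) (q.1+q.2+2)), tail_eq (le_refl 2)]
      _ = ENNReal.ofReal ((fun s => Z 2 - H (s+2) 2) (q.1+q.2)
            * (1 / (((q.1:ℝ)+1) * ((q.2:ℝ)+1)))) := by
          rw [← ENNReal.ofReal_mul hK, mul_comm]
  rw [step1, antidiag_collapse (fun s => Z 2 - H (s+2) 2)
    (fun s => tail_nonneg (le_refl 2) (s+2))]
  have step2 : ∀ s : ℕ, ENNReal.ofReal ((Z 2 - H (s+2) 2) * (2 * H (s+1) 1 / ((s:ℝ)+2)))
      = ∑' m : ℕ, ENNReal.ofReal (2 * H (s+1) 1 / ((s:ℝ)+2) * zr 2 ((m+s)+2)) := by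
    intro s
    have hC : (0:ℝ) ≤ 2 * H (s+1) 1 / ((s:ℝ)+2) := by
      have := H_nonneg (s+1) 1
      positivity
    rw [mul_comm, ← tail_eq (le_refl 2) (s+2),
      ← tsum_mul_left (f := fun m => zr 2 (m + (s+2))),
      ENNReal.ofReal_tsum_of_nonneg (fun m => mul_nonneg hC (zr_nonneg _ _))
      ((summable_zr_add (le_refl 2) (s+2)).mul_left _)]
    refine tsum_congr fun m => ?_
    have harg : m + (s+2) = (m+s)+2 := by omega
    rw [harg]
  rw [tsum_congr step2]
  have step3 : ∑' s : ℕ, ∑' m : ℕ,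
      ENNReal.ofReal (2 * H (s+1) 1 / ((s:ℝ)+2) * zr 2 ((m+s)+2))
      = ∑' k : ℕ, ∑' s : ℕ,
        (if s ≤ k then ENNReal.ofReal (2 * H (s+1) 1 / ((s:ℝ)+2) * zr 2 (k+2)) else 0) := by
    calc ∑' s : ℕ, ∑' m : ℕ,
        ENNReal.ofReal (2 * H (s+1) 1 / ((s:ℝ)+2) * zr 2 ((m+s)+2))
        = ∑' s : ℕ, ∑' k : ℕ,
          (if s ≤ k then ENNReal.ofReal (2 * H (s+1) 1 / ((s:ℝ)+2) * zr 2 (k+2)) else 0) :=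
          tsum_congr fun s =>
            shiftIte (fun k => ENNReal.ofReal (2 * H (s+1) 1 / ((s:ℝ)+2) * zr 2 (k+2))) s
      _ = ∑' k : ℕ, ∑' s : ℕ,
          (if s ≤ k then ENNReal.ofReal (2 * H (s+1) 1 / ((s:ℝ)+2) * zr 2 (k+2)) else 0) :=
          ENNReal.tsum_comm
  rw [step3]
  refine tsum_congr fun k => ?_
  rw [tsum_eq_sum (s := Finset.range (k+1))
    (fun s hs => if_neg (fun h => hs (Finset.mem_range.2 (by omega))))]
  have hpos : ∀ s ∈ Finset.range (k+1),
      (if s ≤ k then ENNReal.ofReal (2 * H (s+1) 1 / ((s:ℝ)+2) * zr 2 (k+2)) else 0)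
        = ENNReal.ofReal (2 * H (s+1) 1 / ((s:ℝ)+2) * zr 2 (k+2)) := fun s hs =>
    if_pos (Nat.lt_succ_iff.1 (Finset.mem_range.1 hs))
  rw [Finset.sum_congr rfl hpos,
    ← ENNReal.ofReal_sum_of_nonneg (fun i _ =>
      mul_nonneg (by have := H_nonneg (i+1) 1; positivity) (zr_nonneg _ _)),
    ← Finset.sum_mul, F1']

lemma Se_eq : Se = We + Ye := by
  have hS := shift0 (fun n => ENNReal.ofReal (H (n+1) 1 ^ 2 * zr 2 (n+1)))
  have hY := shift0 (fun n => ENNReal.ofReal (H (n+1) 2 * zr 2 (n+1)))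
  have hsplit : ∀ k : ℕ, ENNReal.ofReal (H (k+1+1) 1 ^ 2 * zr 2 (k+1+1))
      = ENNReal.ofReal ((H (k+2) 1 ^ 2 - H (k+2) 2) * zr 2 (k+2))
        + ENNReal.ofReal (H (k+1+1) 2 * zr 2 (k+1+1)) := by
    intro k
    rw [← ENNReal.ofReal_add (mul_nonneg (Hsq_sub_nonneg k) (zr_nonneg _ _))
      (mul_nonneg (H_nonneg _ _) (zr_nonneg _ _))]
    congr 1
    have hk : k+1+1 = k+2 := rfl
    rw [hk]
    ring
  rw [Se, hS, We_eq, Ye, hY, tsum_congr hsplit, ENNReal.tsum_add]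
  have h0 : H (0+1) 1 ^ 2 * zr 2 (0+1) = H (0+1) 2 * zr 2 (0+1) := by
    norm_num [H]
  rw [h0]
  ring

lemma tt_bound (a b c : ℕ) : tt a b c
    ≤ 1/3 * ((a:ℝ)+1) ^ (-(4:ℝ)/3) * ((b:ℝ)+1) ^ (-(4:ℝ)/3) * ((c:ℝ)+1) ^ (-(4:ℝ)/3) := by
  set A : ℝ := (a:ℝ)+1 with hA
  set B : ℝ := (b:ℝ)+1 with hB
  set C : ℝ := (c:ℝ)+1 with hC
  have hA0 : (0:ℝ) < A := by positivity
  have hB0 : (0:ℝ) < B := by positivity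
  have hC0 : (0:ℝ) < C := by positivity
  have hx0 : (0:ℝ) < A * B * C := by positivity
  have amgm : A ^ ((1:ℝ)/3) * B ^ ((1:ℝ)/3) * C ^ ((1:ℝ)/3)
      ≤ 1/3 * A + 1/3 * B + 1/3 * C :=
    Real.geom_mean_le_arith_mean3_weighted
      (by norm_num) (by norm_num) (by norm_num) hA0.le hB0.le hC0.le (by norm_num)
  have hmul : (A*B*C) ^ ((1:ℝ)/3) = A ^ ((1:ℝ)/3) * B ^ ((1:ℝ)/3) * C ^ ((1:ℝ)/3) := by
    rw [Real.mul_rpow (by positivity) hC0.le, Real.mul_rpow hA0.le hB0.le]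
  have h43 : (A*B*C) * (A*B*C) ^ ((1:ℝ)/3) = (A*B*C) ^ ((4:ℝ)/3) := by
    nth_rewrite 1 [← Real.rpow_one (A*B*C)]
    rw [← Real.rpow_add hx0]
    norm_num
  have hden : 3 * (A*B*C) ^ ((4:ℝ)/3) ≤ A * B * C * ((a:ℝ)+(b:ℝ)+(c:ℝ)+3) := by
    have hsum : (a:ℝ)+(b:ℝ)+(c:ℝ)+3 = A + B + C := by rw [hA, hB, hC]; ring
    rw [hsum, ← h43]
    have hstep : (A*B*C) ^ ((1:ℝ)/3) ≤ 1/3 * (A+B+C) := by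
      rw [hmul]; linarith
    have hmul2 := mul_le_mul_of_nonneg_left hstep hx0.le
    nlinarith [hmul2]
  have hineq : tt a b c ≤ 1 / (3 * (A*B*C) ^ ((4:ℝ)/3)) := by
    unfold tt
    exact one_div_le_one_div_of_le (by positivity) hden
  refine hineq.trans (le_of_eq ?_)
  have e : A ^ ((4:ℝ)/3) * (B ^ ((4:ℝ)/3) * C ^ ((4:ℝ)/3)) = (A*B*C) ^ ((4:ℝ)/3) := by
    rw [Real.mul_rpow (by positivity) hC0.le, Real.mul_rpow hA0.le hB0.le]
    ring
  have hp : -(4:ℝ)/3 = -((4:ℝ)/3) := by norm_num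
  rw [hp, Real.rpow_neg hA0.le, Real.rpow_neg hB0.le, Real.rpow_neg hC0.le, ← e]
  have h1 : (0:ℝ) < A ^ ((4:ℝ)/3) := Real.rpow_pos_of_pos hA0 _
  have h2 : (0:ℝ) < B ^ ((4:ℝ)/3) := Real.rpow_pos_of_pos hB0 _
  have h3 : (0:ℝ) < C ^ ((4:ℝ)/3) := Real.rpow_pos_of_pos hC0 _
  field_simp

lemma summable_g : Summable (fun n : ℕ => ((n:ℝ)+1) ^ (-(4:ℝ)/3)) := by
  have h : Summable (fun n : ℕ => (n:ℝ) ^ (-(4:ℝ)/3)) :=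
    Real.summable_nat_rpow.2 (by norm_num)
  have := (summable_nat_add_iff 1).2 h
  exact this.congr fun n => by norm_cast

lemma T3e_lt_top : T3e < ⊤ := by
  classical
  set f : ℕ → ℝ≥0∞ := fun n => ENNReal.ofReal (((n:ℝ)+1) ^ (-(4:ℝ)/3)) with hf
  have hg : ∀ n : ℕ, (0:ℝ) ≤ ((n:ℝ)+1) ^ (-(4:ℝ)/3) :=
    fun n => Real.rpow_nonneg (by positivity) _
  have hSgtop : ∑' n, f n ≠ ⊤ := by
    rw [hf, ← ENNReal.ofReal_tsum_of_nonneg hg summable_g]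
    exact ENNReal.ofReal_ne_top
  have hle : ∀ p : (ℕ×ℕ)×ℕ, ENNReal.ofReal (tt p.1.1 p.1.2 p.2)
      ≤ ENNReal.ofReal (1/3) * f p.1.1 * f p.1.2 * f p.2 := by
    intro p
    refine le_trans (ENNReal.ofReal_le_ofReal (tt_bound _ _ _)) (le_of_eq ?_)
    rw [ENNReal.ofReal_mul (by positivity), ENNReal.ofReal_mul (by positivity),
      ENNReal.ofReal_mul (by norm_num)]
  have hpair : ∑' q : ℕ × ℕ, ENNReal.ofReal (1/3) * f q.1 * f q.2
      = ENNReal.ofReal (1/3) * (∑' n, f n) * (∑' n, f n) := by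
    rw [ENNReal.tsum_prod']
    calc ∑' (a : ℕ) (b : ℕ), ENNReal.ofReal (1/3) * f a * f b
        = ∑' a : ℕ, ENNReal.ofReal (1/3) * f a * (∑' n, f n) :=
          tsum_congr fun a => by rw [ENNReal.tsum_mul_left]
      _ = (∑' a : ℕ, ENNReal.ofReal (1/3) * f a) * (∑' n, f n) := ENNReal.tsum_mul_right
      _ = ENNReal.ofReal (1/3) * (∑' n, f n) * (∑' n, f n) := by rw [ENNReal.tsum_mul_left]
  have hsum : ∑' p : (ℕ×ℕ)×ℕ, (ENNReal.ofReal (1/3) * f p.1.1 * f p.1.2 * f p.2)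
      = ENNReal.ofReal (1/3) * (∑' n, f n) * (∑' n, f n) * (∑' n, f n) := by
    rw [ENNReal.tsum_prod']
    calc ∑' (q : ℕ × ℕ) (c : ℕ), ENNReal.ofReal (1/3) * f q.1 * f q.2 * f c
        = ∑' q : ℕ × ℕ, ENNReal.ofReal (1/3) * f q.1 * f q.2 * (∑' n, f n) :=
          tsum_congr fun q => by rw [ENNReal.tsum_mul_left]
      _ = (∑' q : ℕ × ℕ, ENNReal.ofReal (1/3) * f q.1 * f q.2) * (∑' n, f n) :=
          ENNReal.tsum_mul_right
      _ = ENNReal.ofReal (1/3) * (∑' n, f n) * (∑' n, f n) * (∑' n, f n) := by rw [hpair]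
  have hfin : ENNReal.ofReal (1/3) * (∑' n, f n) * (∑' n, f n) * (∑' n, f n) < ⊤ :=
    ENNReal.mul_lt_top
      (ENNReal.mul_lt_top
        (ENNReal.mul_lt_top ENNReal.ofReal_lt_top hSgtop.lt_top) hSgtop.lt_top)
      hSgtop.lt_top
  calc T3e ≤ ∑' p : (ℕ×ℕ)×ℕ, (ENNReal.ofReal (1/3) * f p.1.1 * f p.1.2 * f p.2) :=
        ENNReal.tsum_le_tsum hle
    _ = _ := hsum
    _ < ⊤ := hfin

theorem stmt14 : ∑' n : ℕ, H (n + 1) 1 ^ 2 / ((n : ℝ) + 2) ^ 2 = (11 / 4) * Z 4 := by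
  have hZ2top : Z2e ≠ ⊤ := by rw [Z2e_val]; exact ENNReal.ofReal_ne_top
  have hZZtop : Z2e * Z2e ≠ ⊤ := ENNReal.mul_ne_top hZ2top hZ2top
  have h2 : (2:ℝ≥0∞) ≠ ⊤ := by norm_num
  have hYtop : Ye ≠ ⊤ := by
    refine ne_top_of_le_ne_top hZZtop ?_
    rw [stuffle]
    calc Ye ≤ 2 * Ye := le_mul_of_one_le_left zero_le (by norm_num)
      _ ≤ 2 * Ye + Z4e := le_self_add
  have hEtop : Ee ≠ ⊤ := by
    refine ne_top_of_le_ne_top hZZtop ?_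
    rw [antidiag_eq]
    calc Ee ≤ 4 * Ee := le_mul_of_one_le_left zero_le (by norm_num)
      _ ≤ 2 * Ye + 4 * Ee := le_add_self
  have hTtop : T3e ≠ ⊤ := T3e_lt_top.ne
  have hWtop : We ≠ ⊤ := by
    refine ne_top_of_le_ne_top hTtop ?_
    rw [T3_eq2]
    exact le_mul_of_one_le_left zero_le (by norm_num)
  have hStop : Se ≠ ⊤ := by
    rw [Se_eq]
    exact ENNReal.add_ne_top.2 ⟨hWtop, hYtop⟩
  have eq1 : π^2/6 * (π^2/6) = 2 * Ye.toReal + π^4/90 := by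
    have h := stuffle
    rw [Z2e_val, Z4e_val] at h
    have ht := congrArg ENNReal.toReal h
    rwa [ENNReal.toReal_mul, ENNReal.toReal_ofReal (by positivity),
      ENNReal.toReal_add (ENNReal.mul_ne_top h2 hYtop) ENNReal.ofReal_ne_top,
      ENNReal.toReal_mul, ENNReal.toReal_ofReal (by positivity), ENNReal.toReal_ofNat] at ht
  have eq2 : π^2/6 * (π^2/6) = 2 * Ye.toReal + 4 * Ee.toReal := by
    have h := antidiag_eq
    rw [Z2e_val] at h
    have ht := congrArg ENNReal.toReal h
    rwa [ENNReal.toReal_mul, ENNReal.toReal_ofReal (by positivity),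
      ENNReal.toReal_add (ENNReal.mul_ne_top h2 hYtop) (ENNReal.mul_ne_top (by norm_num) hEtop),
      ENNReal.toReal_mul, ENNReal.toReal_mul, ENNReal.toReal_ofNat, ENNReal.toReal_ofNat] at ht
  have eq3 : T3e.toReal = 2 * Se.toReal + 2 * Ee.toReal := by
    have ht := congrArg ENNReal.toReal T3_eq1
    rwa [ENNReal.toReal_add (ENNReal.mul_ne_top h2 hStop) (ENNReal.mul_ne_top h2 hEtop),
      ENNReal.toReal_mul, ENNReal.toReal_mul, ENNReal.toReal_ofNat] at ht
  have eq4 : T3e.toReal = 3 * We.toReal := by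
    have ht := congrArg ENNReal.toReal T3_eq2
    rwa [ENNReal.toReal_mul, ENNReal.toReal_ofNat] at ht
  have eq5 : Se.toReal = We.toReal + Ye.toReal := by
    have ht := congrArg ENNReal.toReal Se_eq
    rwa [ENNReal.toReal_add hWtop hYtop] at ht
  have hLHS : ∑' n : ℕ, H (n + 1) 1 ^ 2 / ((n : ℝ) + 2) ^ 2 = Se.toReal := by
    rw [Se, ENNReal.tsum_toReal_eq (fun n => ENNReal.ofReal_ne_top)]
    refine tsum_congr fun n => ?_
    rw [ENNReal.toReal_ofReal (mul_nonneg (by positivity) (zr_nonneg _ _)), zr_succ,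
      mul_one_div]
  rw [hLHS, Z4_val]
  linarith
end

section
/- The infinite series ∑_{n=1}^∞ (H_n³ − 3 H_n H_n^{(2)} + 2 H_n^{(3)}) / (n+1)² equals 6ζ(5). -/
open Finset

namespace Aux15

noncomputable def B (n : ℕ) : ℝ := H n 1 ^ 2 - H n 2

noncomputable def A (n : ℕ) : ℝ := H n 1 ^ 3 - 3 * H n 1 * H n 2 + 2 * H n 3

lemma H_zero (r : ℕ) : H 0 r = 0 := by simp [H]

lemma H_succ (n r : ℕ) : H (n + 1) r = H n r + 1 / ((n : ℝ) + 1) ^ r := by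
  simp [H, Finset.sum_range_succ]

lemma H_nonneg (n r : ℕ) : 0 ≤ H n r := by
  apply Finset.sum_nonneg; intro j _; positivity

lemma B_zero : B 0 = 0 := by simp [B, H_zero]

lemma B_succ (n : ℕ) : B (n + 1) = B n + 2 * H n 1 / ((n : ℝ) + 1) := by
  have h := H_succ n 1
  have h2 := H_succ n 2
  have hn : ((n : ℝ) + 1) ≠ 0 := by positivity
  simp only [B, h, h2]
  field_simp
  ring

lemma B_nonneg (n : ℕ) : 0 ≤ B n := by
  induction n with
  | zero => simp [B_zero]
  | succ n ih =>
    rw [B_succ]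
    have := H_nonneg n 1
    positivity

lemma A_succ (n : ℕ) : A (n + 1) = A n + 3 * B n / ((n : ℝ) + 1) := by
  have h := H_succ n 1
  have h2 := H_succ n 2
  have h3 := H_succ n 3
  have hn : ((n : ℝ) + 1) ≠ 0 := by positivity
  simp only [A, B, h, h2, h3]
  field_simp
  ring

lemma A_zero : A 0 = 0 := by simp [A, H_zero]

lemma A_one : A 1 = 0 := by
  rw [A_succ, A_zero, B_zero]; norm_num

lemma A_two : A 2 = 0 := by
  have hB1 : B 1 = 0 := by rw [B_succ, B_zero, H_zero]; norm_num
  rw [A_succ, A_one, hB1]; norm_num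

lemma A_nonneg (n : ℕ) : 0 ≤ A n := by
  induction n with
  | zero => simp [A_zero]
  | succ n ih =>
    rw [A_succ]
    have := B_nonneg n
    positivity

/-- I1 -/
lemma I1 (n : ℕ) :
    ∑ k ∈ range (n + 1), (1 : ℝ) / (((k : ℝ) + 1) * ((n : ℝ) - k + 1)) =
      2 * H (n + 1) 1 / ((n : ℝ) + 2) := by
  have hH : H (n + 1) 1 = ∑ k ∈ range (n + 1), (1 : ℝ) / ((k : ℝ) + 1) := by
    simp [H]
  have key : ∀ k ∈ range (n + 1),
      (1 : ℝ) / (((k : ℝ) + 1) * ((n : ℝ) - k + 1)) =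
        (1 / ((n : ℝ) + 2)) * (1 / ((k : ℝ) + 1) + 1 / ((n : ℝ) - k + 1)) := by
    intro k hk
    have hk' : (k : ℝ) ≤ n := by exact_mod_cast Nat.lt_succ_iff.mp (mem_range.mp hk)
    have h1 : ((k : ℝ) + 1) ≠ 0 := by positivity
    have h2 : ((n : ℝ) - k + 1) ≠ 0 := by nlinarith
    have h3 : ((n : ℝ) + 2) ≠ 0 := by positivity
    field_simp
    ring
  rw [Finset.sum_congr rfl key, ← Finset.mul_sum, Finset.sum_add_distrib]
  have hrefl : ∑ k ∈ range (n + 1), (1 : ℝ) / ((n : ℝ) - k + 1) =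
      ∑ k ∈ range (n + 1), (1 : ℝ) / ((k : ℝ) + 1) := by
    rw [← Finset.sum_range_reflect (fun k => (1 : ℝ) / ((k : ℝ) + 1)) (n + 1)]
    apply Finset.sum_congr rfl
    intro k hk
    have hk' : k ≤ n := Nat.lt_succ_iff.mp (mem_range.mp hk)
    have : ((n + 1 - 1 - k : ℕ) : ℝ) = (n : ℝ) - k := by
      simp only [Nat.add_sub_cancel]
      push_cast [Nat.cast_sub hk']
      ring
    rw [this]
  rw [hrefl, ← hH]
  field_simp
  ring

/-- I2 -/
lemma I2 (N : ℕ) :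
    ∑ k ∈ range N, H (k + 1) 1 / ((k : ℝ) + 2) = B (N + 1) / 2 := by
  induction N with
  | zero =>
    have : B 1 = 0 := by rw [B_succ, B_zero, H_zero]; norm_num
    simp [this]
  | succ N ih =>
    rw [Finset.sum_range_succ, ih, B_succ (N + 1)]
    push_cast
    ring

/-- RS' : reflected version -/
lemma RS' (n : ℕ) :
    ∑ j ∈ range (n + 1), H (n + 1 - j) 1 / ((j : ℝ) + 1) = B (n + 2) := by
  induction n with
  | zero =>
    have hB2 : B 2 = 1 := by
      rw [B_succ, B_succ, B_zero, H_zero, H_succ, H_zero]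
      norm_num
    simp [hB2, H_succ, H_zero]
  | succ n ih =>
    have hB3 := B_succ (n + 2)
    push_cast at hB3
    rw [Finset.sum_range_succ]
    have hterm : ∀ j ∈ range (n + 1),
        H (n + 1 + 1 - j) 1 / ((j : ℝ) + 1) =
          H (n + 1 - j) 1 / ((j : ℝ) + 1) +
            1 / (((j : ℝ) + 1) * ((n : ℝ) - j + 2)) := by
      intro j hj
      have hj' : j ≤ n := Nat.lt_succ_iff.mp (mem_range.mp hj)
      have h1 : n + 1 + 1 - j = (n + 1 - j) + 1 := by omega
      have h2 : ((n + 1 - j : ℕ) : ℝ) = (n : ℝ) + 1 - j := by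
        push_cast [Nat.cast_sub (by omega : j ≤ n + 1)]
        ring
      rw [h1, H_succ, h2]
      generalize H (n + 1 - j) 1 = X
      have hd1 : ((j : ℝ) + 1) ≠ 0 := by positivity
      have hd2 : ((n : ℝ) - j + 2) ≠ 0 := by
        have : (j : ℝ) ≤ n := by exact_mod_cast hj'
        nlinarith
      have h3 : ((n : ℝ) + 1 - (j : ℝ) + 1) = (n : ℝ) - j + 2 := by ring
      rw [pow_one, h3]
      field_simp
    rw [Finset.sum_congr rfl hterm, Finset.sum_add_distrib, ih]
    have hI1 := I1 (n + 1)
    push_cast at hI1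
    have hsum : ∑ j ∈ range (n + 1), (1 : ℝ) / (((j : ℝ) + 1) * ((n : ℝ) - j + 2)) =
        2 * H (n + 2) 1 / ((n : ℝ) + 3) - 1 / ((n : ℝ) + 2) := by
      have hsplit := Finset.sum_range_succ
        (fun j => (1 : ℝ) / (((j : ℝ) + 1) * ((n : ℝ) + 1 - j + 1))) (n + 1)
      have hcongr : ∑ j ∈ range (n + 2), (1 : ℝ) / (((j : ℝ) + 1) * ((n : ℝ) + 1 - j + 1)) =
          2 * H (n + 2) 1 / ((n : ℝ) + 1 + 2) := by
        rw [← hI1]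
      rw [hcongr] at hsplit
      have hcongr2 : ∑ j ∈ range (n + 1), (1 : ℝ) / (((j : ℝ) + 1) * ((n : ℝ) + 1 - j + 1)) =
          ∑ j ∈ range (n + 1), (1 : ℝ) / (((j : ℝ) + 1) * ((n : ℝ) - j + 2)) := by
        apply Finset.sum_congr rfl
        intro j _
        ring_nf
      rw [hcongr2] at hsplit
      have hd : ((n : ℝ) + 2) ≠ 0 := by positivity
      have hlast : (1 : ℝ) / ((((n + 1 : ℕ) : ℝ) + 1) * ((n : ℝ) + 1 - ((n + 1 : ℕ) : ℝ) + 1))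
          = 1 / ((n : ℝ) + 2) := by
        push_cast
        norm_num
        ring
      rw [hlast] at hsplit
      have h3 : ((n : ℝ) + 1 + 2) = (n : ℝ) + 3 := by ring
      rw [h3] at hsplit
      linarith
    rw [hsum]
    have hH1 : H (n + 1 + 1 - (n + 1)) 1 = 1 := by
      norm_num [H_succ, H_zero]
    rw [hH1]
    push_cast
    rw [hB3]
    ring

/-- RS : unreflected version -/
lemma RS (n : ℕ) :
    ∑ k ∈ range (n + 1), H (k + 1) 1 / ((n : ℝ) - k + 1) = B (n + 2) := by
  rw [← RS' n, ← Finset.sum_range_reflect (fun j => H (n + 1 - j) 1 / ((j : ℝ) + 1)) (n + 1)]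
  apply Finset.sum_congr rfl
  intro k hk
  have hk' : k ≤ n := Nat.lt_succ_iff.mp (mem_range.mp hk)
  have h1 : n + 1 - 1 - k = n - k := by omega
  have h2 : n + 1 - (n - k) = k + 1 := by omega
  have h3 : ((n - k : ℕ) : ℝ) = (n : ℝ) - k := by
    push_cast [Nat.cast_sub hk']; ring
  rw [h1, h2, h3]


/-- I3 -/
lemma I3 (n : ℕ) :
    ∑ k ∈ range (n + 1), (2 * H (k + 1) 1 / ((k : ℝ) + 2)) * (1 / ((n : ℝ) - k + 1)) =
      3 * B (n + 2) / ((n : ℝ) + 3) := by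
  have key : ∀ k ∈ range (n + 1),
      (2 * H (k + 1) 1 / ((k : ℝ) + 2)) * (1 / ((n : ℝ) - k + 1)) =
        (2 / ((n : ℝ) + 3)) * (H (k + 1) 1 / ((k : ℝ) + 2) + H (k + 1) 1 / ((n : ℝ) - k + 1)) := by
    intro k hk
    have hk' : (k : ℝ) ≤ n := by exact_mod_cast Nat.lt_succ_iff.mp (mem_range.mp hk)
    have h1 : ((k : ℝ) + 2) ≠ 0 := by positivity
    have h2 : ((n : ℝ) - k + 1) ≠ 0 := by nlinarith
    have h3 : ((n : ℝ) + 3) ≠ 0 := by positivity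
    field_simp
    ring
  rw [Finset.sum_congr rfl key, ← Finset.mul_sum, Finset.sum_add_distrib]
  rw [I2 (n + 1), RS n]
  have : ((n + 1 : ℕ) : ℝ) = (n : ℝ) + 1 := by push_cast; ring
  have h4 : B (n + 1 + 1) = B (n + 2) := by norm_num
  rw [h4]
  field_simp
  ring

/-- A_sum -/
lemma A_sum (N : ℕ) :
    ∑ k ∈ range N, 3 * B (k + 2) / ((k : ℝ) + 3) = A (N + 2) := by
  induction N with
  | zero => simpa using A_two.symm
  | succ N ih =>
    rw [Finset.sum_range_succ, ih]
    have := A_succ (N + 2)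
    push_cast at this ⊢
    rw [show (N : ℝ) + 3 = (N : ℝ) + 2 + 1 by ring]
    linarith


section Series

variable {t : ℝ}

lemma u_summable_norm (ht0 : 0 ≤ t) (ht1 : t < 1) :
    Summable fun n : ℕ => ‖t ^ (n + 1) / ((n : ℝ) + 1)‖ := by
  have hg : Summable fun n : ℕ => t ^ (n + 1) :=
    ((summable_geometric_of_lt_one ht0 ht1).mul_right t).congr
      (fun n => by rw [pow_succ])
  apply Summable.of_nonneg_of_le (fun n => norm_nonneg _) _ hg
  intro n
  rw [Real.norm_eq_abs, abs_div, abs_of_nonneg (pow_nonneg ht0 _),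
    abs_of_nonneg (by positivity : (0:ℝ) ≤ (n : ℝ) + 1)]
  rw [div_le_iff₀ (by positivity)]
  nlinarith [pow_nonneg ht0 (n + 1), (by exact_mod_cast Nat.zero_le n : (0:ℝ) ≤ n),
    mul_le_mul_of_nonneg_left (by linarith : (1:ℝ) ≤ (n:ℝ) + 1) (pow_nonneg ht0 (n+1))]

lemma geo_summable_norm (ht0 : 0 ≤ t) (ht1 : t < 1) :
    Summable fun n : ℕ => ‖t ^ n‖ := by
  refine (summable_geometric_of_lt_one ht0 ht1).congr fun n => ?_
  rw [Real.norm_eq_abs, abs_of_nonneg (pow_nonneg ht0 _)]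

lemma seriesA (ht0 : 0 < t) (ht1 : t < 1) :
    Summable (fun n : ℕ => A n * t ^ n) ∧
      ∑' n : ℕ, A n * t ^ n = (-Real.log (1 - t)) ^ 3 * (1 - t)⁻¹ := by
  set u : ℕ → ℝ := fun n => t ^ (n + 1) / ((n : ℝ) + 1) with hu_def
  have hu : Summable fun n => ‖u n‖ := u_summable_norm ht0.le ht1
  have hL : HasSum u (-Real.log (1 - t)) :=
    Real.hasSum_pow_div_log_of_abs_lt_one (by rw [abs_of_nonneg ht0.le]; exact ht1)
  have tsum_u : ∑' n, u n = -Real.log (1 - t) := hL.tsum_eq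
  set L := -Real.log (1 - t) with hL_def
  -- square
  set P2 : ℕ → ℝ := fun n => ∑ k ∈ range (n + 1), u k * u (n - k) with hP2_def
  have hP2norm : Summable fun n => ‖P2 n‖ :=
    summable_norm_sum_mul_range_of_summable_norm hu hu
  have hP2eq : L * L = ∑' n, P2 n := by
    rw [← tsum_u]
    exact tsum_mul_tsum_eq_tsum_sum_range_of_summable_norm hu hu
  have hP2val : ∀ n, P2 n = t ^ (n + 2) * (2 * H (n + 1) 1 / ((n : ℝ) + 2)) := by
    intro n
    have : ∀ k ∈ range (n + 1),
        u k * u (n - k) = t ^ (n + 2) * (1 / (((k : ℝ) + 1) * ((n : ℝ) - k + 1))) := by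
      intro k hk
      have hk' : k ≤ n := Nat.lt_succ_iff.mp (mem_range.mp hk)
      have hpow : t ^ (k + 1) * t ^ (n - k + 1) = t ^ (n + 2) := by
        rw [← pow_add]; congr 1; omega
      have hcast : ((n - k : ℕ) : ℝ) + 1 = (n : ℝ) - k + 1 := by
        push_cast [Nat.cast_sub hk']; ring
      simp only [hu_def]
      rw [div_mul_div_comm, hpow, hcast]
      rw [mul_one_div]
    rw [hP2_def]
    simp only []
    rw [Finset.sum_congr rfl this, ← Finset.mul_sum, I1 n]
  -- cube
  set P3 : ℕ → ℝ := fun n => ∑ k ∈ range (n + 1), P2 k * u (n - k) with hP3_def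
  have hP3norm : Summable fun n => ‖P3 n‖ :=
    summable_norm_sum_mul_range_of_summable_norm hP2norm hu
  have hP3eq : L * L * L = ∑' n, P3 n := by
    rw [hP2eq, ← tsum_u]
    exact tsum_mul_tsum_eq_tsum_sum_range_of_summable_norm hP2norm hu
  have hP3val : ∀ n, P3 n = t ^ (n + 3) * (3 * B (n + 2) / ((n : ℝ) + 3)) := by
    intro n
    have : ∀ k ∈ range (n + 1),
        P2 k * u (n - k) =
          t ^ (n + 3) * ((2 * H (k + 1) 1 / ((k : ℝ) + 2)) * (1 / ((n : ℝ) - k + 1))) := by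
      intro k hk
      have hk' : k ≤ n := Nat.lt_succ_iff.mp (mem_range.mp hk)
      have hpow : t ^ (k + 2) * t ^ (n - k + 1) = t ^ (n + 3) := by
        rw [← pow_add]; congr 1; omega
      have hcast : ((n - k : ℕ) : ℝ) + 1 = (n : ℝ) - k + 1 := by
        push_cast [Nat.cast_sub hk']; ring
      rw [hP2val k]
      simp only [hu_def]
      rw [hcast.symm]
      generalize 2 * H (k + 1) 1 / ((k : ℝ) + 2) = C
      rw [mul_comm (t ^ (k+2)) C, mul_assoc, div_eq_mul_one_div (t ^ (n-k+1)), 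
        ← mul_assoc (t^(k+2)), hpow]
      ring
    rw [hP3_def]
    simp only []
    rw [Finset.sum_congr rfl this, ← Finset.mul_sum, I3 n]
  -- times geometric
  have hgeo : Summable fun n : ℕ => ‖t ^ n‖ := geo_summable_norm ht0.le ht1
  set P4 : ℕ → ℝ := fun n => ∑ k ∈ range (n + 1), P3 k * t ^ (n - k) with hP4_def
  have hP4norm : Summable fun n => ‖P4 n‖ :=
    summable_norm_sum_mul_range_of_summable_norm hP3norm hgeo
  have hP4eq : L * L * L * (1 - t)⁻¹ = ∑' n, P4 n := by
    rw [hP3eq, ← tsum_geometric_of_lt_one ht0.le ht1]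
    exact tsum_mul_tsum_eq_tsum_sum_range_of_summable_norm hP3norm hgeo
  have hP4val : ∀ n, P4 n = A (n + 3) * t ^ (n + 3) := by
    intro n
    have : ∀ k ∈ range (n + 1),
        P3 k * t ^ (n - k) = t ^ (n + 3) * (3 * B (k + 2) / ((k : ℝ) + 3)) := by
      intro k hk
      have hk' : k ≤ n := Nat.lt_succ_iff.mp (mem_range.mp hk)
      have hpow : t ^ (k + 3) * t ^ (n - k) = t ^ (n + 3) := by
        rw [← pow_add]; congr 1; omega
      rw [hP3val k, mul_comm (t ^ (k+3)), mul_assoc, hpow]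
      ring
    rw [hP4_def]
    simp only []
    rw [Finset.sum_congr rfl this, ← Finset.mul_sum, A_sum (n + 1)]
    push_cast
    ring_nf
  have hS3 : Summable fun n : ℕ => A (n + 3) * t ^ (n + 3) := by
    refine hP4norm.of_norm.congr fun n => ?_
    rw [hP4val n]
  have hSA : Summable fun n : ℕ => A n * t ^ n := (summable_nat_add_iff 3).mp hS3
  constructor
  · exact hSA
  · have hsplit := Summable.sum_add_tsum_nat_add 3 hSA
    have hhead : ∑ i ∈ range 3, A i * t ^ i = 0 := by
      simp [Finset.sum_range_succ, A_zero, A_one, A_two]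
    have htail : ∑' n : ℕ, A (n + 3) * t ^ (n + 3) = L * L * L * (1 - t)⁻¹ := by
      rw [hP4eq]
      exact tsum_congr fun n => (hP4val n).symm
    rw [← hsplit, hhead, htail, hL_def]
    ring

end Series


section Integrals

open MeasureTheory Set Filter

lemma contOn_pow_mul_log (n k : ℕ) :
    ContinuousOn (fun x : ℝ => x ^ n * (-Real.log x) ^ k) (Ioo (0:ℝ) 1) := by
  apply ContinuousOn.mul (continuous_pow n).continuousOn
  apply ContinuousOn.pow
  apply ContinuousOn.neg
  apply Real.continuousOn_log.mono
  intro x hx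
  exact ne_of_gt hx.1

lemma integrableOn_pow_mul_log (n k : ℕ) :
    IntegrableOn (fun x : ℝ => x ^ n * (-Real.log x) ^ k) (Ioo (0:ℝ) 1) := by
  have h2k : (0:ℝ) < (2 * k + 2 : ℝ) := by positivity
  set ε : ℝ := ((2:ℝ) * k + 2)⁻¹ with hε_def
  have hεpos : 0 < ε := by positivity
  have hmul : ε * (2 * (k:ℝ) + 2) = 1 := inv_mul_cancel₀ (ne_of_gt h2k)
  have hεk : ε * (k:ℝ) ≤ 1/2 := by nlinarith [hεpos.le, mul_nonneg hεpos.le (Nat.cast_nonneg k : (0:ℝ) ≤ k)]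
  have hg : IntegrableOn (fun x : ℝ => ((2:ℝ) * k + 2) ^ k * x ^ (-(1/2) : ℝ)) (Ioo (0:ℝ) 1) := by
    have h1 : IntervalIntegrable (fun x : ℝ => x ^ (-(1/2) : ℝ)) volume 0 1 :=
      intervalIntegral.intervalIntegrable_rpow' (by norm_num)
    have h2 := (intervalIntegrable_iff_integrableOn_Ioo_of_le (by norm_num : (0:ℝ) ≤ 1)).mp h1
    exact h2.const_mul _
  refine Integrable.mono' hg ((contOn_pow_mul_log n k).aestronglyMeasurable measurableSet_Ioo) ?_
  rw [ae_restrict_iff' measurableSet_Ioo]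
  filter_upwards with x hx
  obtain ⟨hx0, hx1⟩ := hx
  have hlog : 0 ≤ -Real.log x := by
    rw [neg_nonneg]
    exact Real.log_nonpos hx0.le hx1.le
  have hxn : x ^ n ≤ 1 := pow_le_one₀ hx0.le hx1.le
  have hbound : -Real.log x ≤ ((2:ℝ) * k + 2) * x ^ (-ε) := by
    have h := Real.log_le_rpow_div (le_of_lt (inv_pos.mpr hx0)) hεpos
    rw [Real.log_inv] at h
    rw [Real.inv_rpow hx0.le, ← Real.rpow_neg hx0.le] at h
    calc -Real.log x ≤ x ^ (-ε) / ε := h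
      _ = ((2:ℝ) * k + 2) * x ^ (-ε) := by
          rw [hε_def, div_eq_mul_inv, inv_inv, mul_comm]
  calc ‖x ^ n * (-Real.log x) ^ k‖ = x ^ n * (-Real.log x) ^ k := by
        rw [Real.norm_eq_abs, abs_of_nonneg]
        exact mul_nonneg (pow_nonneg hx0.le n) (pow_nonneg hlog k)
    _ ≤ 1 * (-Real.log x) ^ k :=
        mul_le_mul_of_nonneg_right hxn (pow_nonneg hlog k)
    _ = (-Real.log x) ^ k := one_mul _
    _ ≤ (((2:ℝ) * k + 2) * x ^ (-ε)) ^ k := pow_le_pow_left₀ hlog hbound k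
    _ = ((2:ℝ) * k + 2) ^ k * (x ^ (-ε)) ^ k := mul_pow _ _ _
    _ ≤ ((2:ℝ) * k + 2) ^ k * x ^ (-(1/2) : ℝ) := by
        apply mul_le_mul_of_nonneg_left _ (by positivity)
        rw [← Real.rpow_natCast (x ^ (-ε)) k, ← Real.rpow_mul hx0.le]
        apply Real.rpow_le_rpow_of_exponent_ge hx0 hx1.le
        rw [neg_mul]
        nlinarith [hεk]

/-- FTC over `Ioo 0 1` with a limit at the left endpoint. -/
lemma FTC0 {F f : ℝ → ℝ} {c : ℝ} (hd : ∀ x ∈ Ioi (0:ℝ), HasDerivAt F (f x) x)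
    (hi : IntegrableOn f (Ioo (0:ℝ) 1)) (hlim : Tendsto F (nhdsWithin 0 (Ioi 0)) (nhds c)) :
    ∫ x in Ioo (0:ℝ) 1, f x = F 1 - c := by
  set a : ℕ → ℝ := fun i => ((i:ℝ) + 2)⁻¹ with ha_def
  have ha_pos : ∀ i, 0 < a i := fun i => by positivity
  have ha_lt : ∀ i, a i < 1 := by
    intro i
    rw [ha_def]
    rw [inv_lt_one_iff₀]
    right
    have : (0:ℝ) ≤ (i:ℝ) := Nat.cast_nonneg i
    linarith
  set s : ℕ → Set ℝ := fun i => Ioo (a i) 1 with hs_def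
  have hmeas : ∀ i, MeasurableSet (s i) := fun i => measurableSet_Ioo
  have hmono : Monotone s := by
    intro i j hij
    refine Set.Ioo_subset_Ioo ?_ le_rfl
    rw [ha_def]
    refine inv_anti₀ (by positivity) ?_
    have : (i:ℝ) ≤ j := Nat.cast_le.mpr hij
    linarith
  have hU : (⋃ i, s i) = Ioo (0:ℝ) 1 := by
    ext x
    simp only [mem_iUnion, hs_def, Set.mem_Ioo]
    constructor
    · rintro ⟨i, h1, h2⟩
      exact ⟨lt_trans (ha_pos i) h1, h2⟩
    · rintro ⟨h1, h2⟩
      obtain ⟨i, hi⟩ := exists_nat_gt x⁻¹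
      refine ⟨i, ?_, h2⟩
      rw [ha_def]
      rw [inv_lt_comm₀ (by positivity) h1]
      calc x⁻¹ < i := hi
        _ ≤ (i:ℝ) + 2 := by linarith
  have hi' : IntegrableOn f (⋃ i, s i) := by rw [hU]; exact hi
  have ht := tendsto_setIntegral_of_monotone hmeas hmono hi'
  rw [hU] at ht
  have heval : ∀ i, ∫ x in s i, f x = F 1 - F (a i) := by
    intro i
    have hle : a i ≤ 1 := (ha_lt i).le
    have hii : IntervalIntegrable f volume (a i) 1 := by
      rw [intervalIntegrable_iff_integrableOn_Ioo_of_le hle]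
      exact hi.mono_set (Set.Ioo_subset_Ioo (ha_pos i).le le_rfl)
    have hftc := intervalIntegral.integral_eq_sub_of_hasDerivAt
      (f := F) (f' := f) (a := a i) (b := 1) ?_ hii
    · rw [hs_def]
      simp only []
      rw [← MeasureTheory.integral_Ioc_eq_integral_Ioo,
        ← intervalIntegral.integral_of_le hle, hftc]
    · intro x hx
      rw [uIcc_of_le hle] at hx
      exact hd x (lt_of_lt_of_le (ha_pos i) hx.1)
  have ha_tend : Tendsto a atTop (nhdsWithin 0 (Ioi 0)) := by
    apply tendsto_nhdsWithin_of_tendsto_nhds_of_eventually_within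
    · have h1 : Tendsto (fun i : ℕ => (i:ℝ) + 2) atTop atTop :=
        tendsto_atTop_add_const_right _ 2 tendsto_natCast_atTop_atTop
      exact h1.inv_tendsto_atTop
    · filter_upwards with i
      exact ha_pos i
  have ht2 : Tendsto (fun i => ∫ x in s i, f x) atTop (nhds (F 1 - c)) := by
    have : Tendsto (fun i => F 1 - F (a i)) atTop (nhds (F 1 - c)) :=
      tendsto_const_nhds.sub (hlim.comp ha_tend)
    exact this.congr fun i => (heval i).symm
  exact tendsto_nhds_unique ht ht2

lemma Jval (k : ℕ) : ∀ n : ℕ, ∫ x in Ioo (0:ℝ) 1, x ^ n * (-Real.log x) ^ k =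
    (k.factorial : ℝ) / ((n:ℝ) + 1) ^ (k + 1) := by
  induction k with
  | zero =>
    intro n
    simp only [pow_zero, mul_one, Nat.factorial_zero, Nat.cast_one, pow_one]
    rw [← MeasureTheory.integral_Ioc_eq_integral_Ioo,
      ← intervalIntegral.integral_of_le (by norm_num : (0:ℝ) ≤ 1), integral_pow]
    norm_num
  | succ k ih =>
    intro n
    set F : ℝ → ℝ := fun x => x ^ (n+1) * (-Real.log x) ^ (k+1) / ((n:ℝ) + 1) with hF_def
    set D : ℝ → ℝ := fun x => x ^ n * (-Real.log x) ^ (k+1)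
      - (((k:ℝ)+1)/((n:ℝ)+1)) * (x ^ n * (-Real.log x) ^ k) with hD_def
    have hn1 : ((n:ℝ) + 1) ≠ 0 := by positivity
    have hd : ∀ x ∈ Ioi (0:ℝ), HasDerivAt F (D x) x := by
      intro x hx
      have hx0 : (0:ℝ) < x := hx
      have h1 : HasDerivAt (fun y : ℝ => y ^ (n+1)) (((n:ℝ)+1) * x ^ n) x := by
        have := hasDerivAt_pow (n+1) x
        simpa using this
      have h2 : HasDerivAt (fun y : ℝ => (-Real.log y) ^ (k+1))
          (((k:ℝ)+1) * (-Real.log x) ^ k * (-x⁻¹)) x := by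
        have hl : HasDerivAt (fun y : ℝ => -Real.log y) (-x⁻¹) x :=
          (Real.hasDerivAt_log hx0.ne').neg
        have := hl.fun_pow (k+1)
        simpa using this
      have h3 := (h1.fun_mul h2).div_const ((n:ℝ)+1)
      convert h3 using 1
      · rfl
      · rfl
      rw [hD_def]
      simp only []
      have hxinv : x⁻¹ * x = 1 := inv_mul_cancel₀ hx0.ne'
      field_simp
      ring_nf
    have hlim : Tendsto F (nhdsWithin 0 (Ioi 0)) (nhds 0) := by
      set r : ℝ := ((n:ℝ)+1)/((k:ℝ)+1) with hr_def
      have hr : (0:ℝ) < r := by positivity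
      have h0 := (tendsto_log_mul_rpow_nhdsGT_zero hr).pow (k+1)
      rw [zero_pow (Nat.succ_ne_zero k)] at h0
      have h1 := h0.mul_const ((-1:ℝ)^(k+1) / ((n:ℝ)+1))
      rw [zero_mul] at h1
      apply Filter.Tendsto.congr' _ h1
      filter_upwards [self_mem_nhdsWithin] with x hx
      have hx0 : (0:ℝ) < x := hx
      have hxr : (x ^ r) ^ (k+1) = x ^ (n+1) := by
        have e1 : (x ^ r) ^ ((k:ℕ)+1) = (x ^ r) ^ (((k:ℕ)+1 : ℕ) : ℝ) :=
          (Real.rpow_natCast _ _).symm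
        rw [e1, ← Real.rpow_mul hx0.le]
        have e2 : r * (((k:ℕ)+1 : ℕ) : ℝ) = ((n:ℕ)+1 : ℕ) := by
          rw [hr_def]
          push_cast
          field_simp
        rw [e2, Real.rpow_natCast]
      rw [hF_def]
      simp only []
      rw [mul_pow, hxr]
      rw [show -Real.log x = -1 * Real.log x by ring, mul_pow]
      ring
    have hiD : IntegrableOn D (Ioo (0:ℝ) 1) := by
      apply Integrable.sub (integrableOn_pow_mul_log n (k+1))
      exact (integrableOn_pow_mul_log n k).const_mul _
    have hD0 : ∫ x in Ioo (0:ℝ) 1, D x = 0 := by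
      rw [FTC0 hd hiD hlim]
      rw [hF_def]
      simp [Real.log_one]
    have hsplit : (fun x : ℝ => x ^ n * (-Real.log x) ^ (k+1)) =
        fun x => D x + (((k:ℝ)+1)/((n:ℝ)+1)) * (x ^ n * (-Real.log x) ^ k) := by
      funext x
      rw [hD_def]
      ring
    rw [hsplit, MeasureTheory.integral_add hiD ((integrableOn_pow_mul_log n k).const_mul _),
      hD0, MeasureTheory.integral_const_mul, ih n]
    rw [Nat.factorial_succ]
    push_cast
    field_simp
    ring

end Integrals



section Assembly

open MeasureTheory Set Filter

noncomputable def phi : ℝ → ℝ :=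
  fun t => (-Real.log t) * ((-Real.log (1 - t)) ^ 3 * (1 - t)⁻¹)

lemma measurable_phi : Measurable phi := by
  unfold phi
  apply Measurable.mul Real.measurable_log.neg
  apply Measurable.mul
  · exact ((Real.measurable_log.comp (measurable_const.sub measurable_id)).neg.pow_const 3)
  · exact (measurable_const.sub measurable_id).inv

lemma meas_term (n : ℕ) :
    Measurable (fun t : ℝ => ENNReal.ofReal (A n * (t ^ n * (-Real.log t)))) := by
  apply ENNReal.measurable_ofReal.comp
  exact measurable_const.mul ((measurable_id.pow_const n).mul Real.measurable_log.neg)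

lemma E1 (n : ℕ) :
    ∫⁻ t in Ioo (0:ℝ) 1, ENNReal.ofReal (A n * (t ^ n * (-Real.log t))) =
      ENNReal.ofReal (A n / ((n:ℝ) + 1) ^ 2) := by
  have hint : IntegrableOn (fun t : ℝ => A n * (t ^ n * (-Real.log t))) (Ioo (0:ℝ) 1) := by
    have h : IntegrableOn (fun x : ℝ => A n * (x ^ n * (-Real.log x) ^ 1)) (Ioo (0:ℝ) 1) :=
      (integrableOn_pow_mul_log n 1).const_mul (A n)
    refine IntegrableOn.congr_fun h (fun t _ => ?_) measurableSet_Ioo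
    rw [pow_one]
  have hnn : 0 ≤ᵐ[volume.restrict (Ioo (0:ℝ) 1)]
      fun t : ℝ => A n * (t ^ n * (-Real.log t)) := by
    rw [EventuallyLE, ae_restrict_iff' measurableSet_Ioo]
    filter_upwards with t ht
    have := Real.log_nonpos ht.1.le ht.2.le
    have := A_nonneg n
    have : (0:ℝ) ≤ t ^ n := pow_nonneg ht.1.le n
    simp only [Pi.zero_apply]
    nlinarith [Real.log_nonpos ht.1.le ht.2.le, A_nonneg n, pow_nonneg ht.1.le n,
      mul_nonneg (pow_nonneg ht.1.le n) (neg_nonneg.mpr (Real.log_nonpos ht.1.le ht.2.le))]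
  rw [← MeasureTheory.ofReal_integral_eq_lintegral_ofReal hint hnn]
  congr 1
  rw [MeasureTheory.integral_const_mul]
  have hJ : ∫ t in Ioo (0:ℝ) 1, t ^ n * (-Real.log t) = 1 / ((n:ℝ) + 1) ^ 2 := by
    have := Jval 1 n
    simp only [pow_one, Nat.factorial_one, Nat.cast_one] at this
    exact this
  rw [hJ]
  ring

lemma lhs_eq :
    ∑' n : ℕ, ENNReal.ofReal (A n / ((n:ℝ) + 1) ^ 2) =
      ∫⁻ t in Ioo (0:ℝ) 1, ENNReal.ofReal (phi t) := by
  have h1 : ∀ n : ℕ, ENNReal.ofReal (A n / ((n:ℝ) + 1) ^ 2) =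
      ∫⁻ t in Ioo (0:ℝ) 1, ENNReal.ofReal (A n * (t ^ n * (-Real.log t))) :=
    fun n => (E1 n).symm
  rw [tsum_congr h1, ← MeasureTheory.lintegral_tsum (fun n => (meas_term n).aemeasurable)]
  apply MeasureTheory.setLIntegral_congr_fun measurableSet_Ioo
  intro t ht
  obtain ⟨ht0, ht1⟩ := ht
  have hlog : 0 ≤ -Real.log t := by
    rw [neg_nonneg]; exact Real.log_nonpos ht0.le ht1.le
  have hSA := (seriesA ht0 ht1).1
  have hTA := (seriesA ht0 ht1).2
  have hS : Summable fun n : ℕ => A n * (t ^ n * (-Real.log t)) := by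
    refine (hSA.mul_right (-Real.log t)).congr fun n => ?_
    ring
  have hnn : ∀ n : ℕ, 0 ≤ A n * (t ^ n * (-Real.log t)) := by
    intro n
    exact mul_nonneg (A_nonneg n) (mul_nonneg (pow_nonneg ht0.le n) hlog)
  beta_reduce
  rw [← ENNReal.ofReal_tsum_of_nonneg hnn hS]
  congr 1
  have : ∑' n : ℕ, A n * (t ^ n * (-Real.log t)) =
      (∑' n : ℕ, A n * t ^ n) * (-Real.log t) := by
    rw [← tsum_mul_right]
    exact tsum_congr fun n => by ring
  rw [this, hTA]
  unfold phi
  ring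


lemma refl_lintegral (f : ℝ → ENNReal) (hf : Measurable f) :
    ∫⁻ x in Ioo (0:ℝ) 1, f (1 - x) = ∫⁻ x in Ioo (0:ℝ) 1, f x := by
  rw [← MeasureTheory.lintegral_indicator measurableSet_Ioo,
    ← MeasureTheory.lintegral_indicator measurableSet_Ioo]
  have hmp := MeasureTheory.Measure.measurePreserving_sub_left (volume : Measure ℝ) 1
  have hcomp := hmp.lintegral_comp (f := (Ioo (0:ℝ) 1).indicator f)
    (hf.indicator measurableSet_Ioo)
  rw [← hcomp]
  apply lintegral_congr
  intro x
  by_cases hx : x ∈ Ioo (0:ℝ) 1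
  · have hx' : (1 - x) ∈ Ioo (0:ℝ) 1 := by
      obtain ⟨h1, h2⟩ := hx
      exact ⟨by linarith, by linarith⟩
    rw [indicator_of_mem hx, indicator_of_mem hx']
  · have hx' : (1 - x) ∉ Ioo (0:ℝ) 1 := by
      intro hc
      obtain ⟨h1, h2⟩ := hc
      exact hx ⟨by linarith, by linarith⟩
    rw [indicator_of_notMem hx, indicator_of_notMem hx']

lemma meas_term2 (m : ℕ) :
    Measurable (fun t : ℝ => ENNReal.ofReal
      ((1 / ((m:ℝ) + 1)) * (t ^ m * (-Real.log t) ^ 3))) := by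
  apply ENNReal.measurable_ofReal.comp
  exact measurable_const.mul ((measurable_id.pow_const m).mul (Real.measurable_log.neg.pow_const 3))

lemma E2 (m : ℕ) :
    ∫⁻ t in Ioo (0:ℝ) 1, ENNReal.ofReal ((1 / ((m:ℝ) + 1)) * (t ^ m * (-Real.log t) ^ 3)) =
      ENNReal.ofReal (6 / ((m:ℝ) + 1) ^ 5) := by
  have hint : IntegrableOn (fun t : ℝ => (1 / ((m:ℝ) + 1)) * (t ^ m * (-Real.log t) ^ 3))
      (Ioo (0:ℝ) 1) := (integrableOn_pow_mul_log m 3).const_mul _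
  have hnn : 0 ≤ᵐ[volume.restrict (Ioo (0:ℝ) 1)]
      fun t : ℝ => (1 / ((m:ℝ) + 1)) * (t ^ m * (-Real.log t) ^ 3) := by
    rw [EventuallyLE, ae_restrict_iff' measurableSet_Ioo]
    filter_upwards with t ht
    have hlog : 0 ≤ -Real.log t := by
      rw [neg_nonneg]; exact Real.log_nonpos ht.1.le ht.2.le
    simp only [Pi.zero_apply]
    have h1 : (0:ℝ) ≤ 1 / ((m:ℝ) + 1) := by positivity
    exact mul_nonneg h1 (mul_nonneg (pow_nonneg ht.1.le m) (pow_nonneg hlog 3))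
  rw [← MeasureTheory.ofReal_integral_eq_lintegral_ofReal hint hnn]
  congr 1
  rw [MeasureTheory.integral_const_mul, Jval 3 m]
  rw [show ((Nat.factorial 3 : ℕ):ℝ) = 6 by norm_num [Nat.factorial]]
  have hm : ((m:ℝ) + 1) ≠ 0 := by positivity
  field_simp

lemma rhs_eq :
    ∫⁻ t in Ioo (0:ℝ) 1, ENNReal.ofReal (phi t) =
      ∑' m : ℕ, ENNReal.ofReal (6 / ((m:ℝ) + 1) ^ 5) := by
  rw [← refl_lintegral (fun t => ENNReal.ofReal (phi t))
    (ENNReal.measurable_ofReal.comp measurable_phi)]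
  have hpt : ∀ t ∈ Ioo (0:ℝ) 1, ENNReal.ofReal (phi (1 - t)) =
      ∑' m : ℕ, ENNReal.ofReal ((1 / ((m:ℝ) + 1)) * (t ^ m * (-Real.log t) ^ 3)) := by
    intro t ⟨ht0, ht1⟩
    have hlog : 0 ≤ -Real.log t := by
      rw [neg_nonneg]; exact Real.log_nonpos ht0.le ht1.le
    have hu : Summable fun n : ℕ => ‖t ^ (n + 1) / ((n : ℝ) + 1)‖ :=
      u_summable_norm ht0.le ht1
    have hL : HasSum (fun n : ℕ => t ^ (n + 1) / ((n : ℝ) + 1)) (-Real.log (1 - t)) :=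
      Real.hasSum_pow_div_log_of_abs_lt_one (by rw [abs_of_nonneg ht0.le]; exact ht1)
    have hphi : phi (1 - t) = (-Real.log (1 - t)) * ((-Real.log t) ^ 3 * t⁻¹) := by
      unfold phi
      norm_num
    have hterm : ∀ m : ℕ, (t ^ (m + 1) / ((m:ℝ) + 1)) * ((-Real.log t) ^ 3 * t⁻¹) =
        (1 / ((m:ℝ) + 1)) * (t ^ m * (-Real.log t) ^ 3) := by
      intro m
      have : t ^ (m + 1) * t⁻¹ = t ^ m := by
        rw [pow_succ, mul_assoc, mul_inv_cancel₀ ht0.ne', mul_one]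
      field_simp
      ring
    have hS : Summable fun m : ℕ => (1 / ((m:ℝ) + 1)) * (t ^ m * (-Real.log t) ^ 3) := by
      refine (hu.of_norm.mul_right ((-Real.log t) ^ 3 * t⁻¹)).congr fun m => hterm m
    have hval : ∑' m : ℕ, (1 / ((m:ℝ) + 1)) * (t ^ m * (-Real.log t) ^ 3) = phi (1 - t) := by
      rw [hphi, ← hL.tsum_eq, ← tsum_mul_right]
      exact tsum_congr fun m => (hterm m).symm
    have hnn : ∀ m : ℕ, 0 ≤ (1 / ((m:ℝ) + 1)) * (t ^ m * (-Real.log t) ^ 3) := by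
      intro m
      have h1 : (0:ℝ) ≤ 1 / ((m:ℝ) + 1) := by positivity
      exact mul_nonneg h1 (mul_nonneg (pow_nonneg ht0.le m) (pow_nonneg hlog 3))
    rw [← hval, ENNReal.ofReal_tsum_of_nonneg hnn hS]
  have h1 : ∫⁻ t in Ioo (0:ℝ) 1, ENNReal.ofReal (phi (1 - t)) =
      ∫⁻ t in Ioo (0:ℝ) 1,
        ∑' m : ℕ, ENNReal.ofReal ((1 / ((m:ℝ) + 1)) * (t ^ m * (-Real.log t) ^ 3)) := by
    apply MeasureTheory.setLIntegral_congr_fun measurableSet_Ioo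
    intro t ht
    exact hpt t ht
  rw [h1, MeasureTheory.lintegral_tsum (fun m => (meas_term2 m).aemeasurable)]
  exact tsum_congr fun m => E2 m


lemma hZ5_summable : Summable fun n : ℕ => (1:ℝ) / ((n:ℝ) + 1) ^ 5 := by
  have h : Summable fun n : ℕ => (1:ℝ) / (n:ℝ) ^ 5 :=
    Real.summable_one_div_nat_pow.mpr (by norm_num)
  have h2 := (summable_nat_add_iff 1).mpr h
  refine h2.congr fun n => ?_
  push_cast
  ring

lemma key_eq :
    ∑' n : ℕ, ENNReal.ofReal (A n / ((n:ℝ) + 1) ^ 2) = ENNReal.ofReal (6 * Z 5) := by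
  rw [lhs_eq, rhs_eq]
  have hS6 : Summable fun m : ℕ => (6:ℝ) / ((m:ℝ) + 1) ^ 5 := by
    refine (hZ5_summable.mul_left 6).congr fun m => ?_
    rw [mul_one_div]
  rw [← ENNReal.ofReal_tsum_of_nonneg (fun m => by positivity) hS6]
  congr 1
  unfold Z
  rw [← tsum_mul_left]
  exact tsum_congr fun m => by rw [mul_one_div]

end Assembly

end Aux15

theorem stmt15 :
    ∑' n : ℕ,
      (H (n + 1) 1 ^ 3 - 3 * H (n + 1) 1 * H (n + 1) 2 + 2 * H (n + 1) 3) / ((n : ℝ) + 2) ^ 2 =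
      6 * Z 5 := by
  classical
  set f : ℕ → ℝ := fun n => Aux15.A n / ((n:ℝ) + 1) ^ 2 with hf_def
  have hnn : ∀ n : ℕ, 0 ≤ f n := fun n =>
    div_nonneg (Aux15.A_nonneg n) (by positivity)
  have key := Aux15.key_eq
  have hne : (∑' n : ℕ, ENNReal.ofReal (f n)) ≠ ⊤ := by
    rw [hf_def]
    simp only []
    rw [key]
    exact ENNReal.ofReal_ne_top
  have hsum : Summable f := by
    have h := ENNReal.summable_toReal hne
    refine h.congr fun n => ?_
    rw [ENNReal.toReal_ofReal (hnn n)]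
  have htsum : ∑' n : ℕ, f n = 6 * Z 5 := by
    have h1 : ENNReal.ofReal (∑' n : ℕ, f n) = ENNReal.ofReal (6 * Z 5) := by
      rw [ENNReal.ofReal_tsum_of_nonneg hnn hsum]
      exact key
    have hZnn : 0 ≤ 6 * Z 5 := by
      have : 0 ≤ Z 5 := tsum_nonneg fun n => by positivity
      linarith
    rwa [ENNReal.ofReal_eq_ofReal_iff (tsum_nonneg hnn) hZnn] at h1
  have hshift := Summable.tsum_eq_zero_add hsum
  have h0 : f 0 = 0 := by
    rw [hf_def]
    simp [Aux15.A_zero]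
  have htail : ∑' n : ℕ, f (n + 1) = 6 * Z 5 := by
    rw [htsum, h0, zero_add] at hshift
    exact hshift.symm
  have hgoal : (fun n : ℕ =>
      (H (n + 1) 1 ^ 3 - 3 * H (n + 1) 1 * H (n + 1) 2 + 2 * H (n + 1) 3) / ((n : ℝ) + 2) ^ 2)
      = fun n : ℕ => f (n + 1) := by
    funext n
    rw [hf_def]
    simp only [Aux15.A]
    push_cast
    ring
  rw [hgoal]
  exact htail
end
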